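/- Let ε > 0, d ≥ 1, k ≥ 1, and for each j = 1,…,k let X^j ∈ ℝ^{d×m_j} with m_j ≥ 1, at least one of which is a nonzero matrix. Let X = [X^1,…,X^k] ∈ ℝ^{d×m} be the horizontal concatenation with m = Σ_j m_j. Define R(X,ε) = (m/2)·log det(I_d + (d/(mε²))·XXᵀ) and R_C(X,ε) = Σ_{j=1}^k (m_j/2)·log det(I_d + (d/(m_jε²))·X^j(X^j)ᵀ). Then the rate of separability RS = R_C(X,ε)/R(X,ε) satisfies 0 < RS ≤ 1. -/

import Mathlib

open Matrix BigOperators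

/-- Horizontal concatenation `[X^1, …, X^k]` of matrices, columns indexed by a sigma type. -/
def hconcat {d k : ℕ} {m : Fin k → ℕ} (Xc : (j : Fin k) → Matrix (Fin d) (Fin (m j)) ℝ) :
    Matrix (Fin d) ((j : Fin k) × Fin (m j)) ℝ :=
  Matrix.of fun i p => Xc p.1 i p.2

/-- The coding rate `R(X, ε) = (m/2)·log det(I + (d/(m ε²))·X Xᵀ)`. -/
noncomputable def codingRate {d : ℕ} {ι : Type} [Fintype ι]
    (X : Matrix (Fin d) ι ℝ) (ε : ℝ) : ℝ :=
  ((Fintype.card ι : ℝ) / 2) *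
    Real.log
      (Matrix.det
        ((1 : Matrix (Fin d) (Fin d) ℝ) +
          ((d : ℝ) / ((Fintype.card ι : ℝ) * ε ^ 2)) • (X * Xᵀ)))

/-!
With `P_j = I + (d/(m_j ε²)) X^j X^jᵀ`, the identity `X Xᵀ = Σ_j X^j X^jᵀ` makes the coding matrix
of the whole data the convex combination `Σ_j (m_j/m) P_j`, so concavity of `log det` on positive
definite matrices gives `R_C ≤ R`. Both rates are positive because `I + c A` with `A ≠ 0` positive
semidefinite and `c > 0` has all eigenvalues `≥ 1` and one `> 1`.
-/

namespace Matrix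

variable {n : Type*} [Fintype n] [DecidableEq n]

lemma IsHermitian.det_smul_one_add_smul {A : Matrix n n ℝ} (hA : A.IsHermitian) (a b : ℝ) :
    (a • 1 + b • A).det = ∏ i, (a + b * hA.eigenvalues i) := by
  have hcfc : cfc (fun x => a + b * x) A = a • 1 + b • A := by
    rw [cfc_const_add a (b * ·) A, cfc_const_mul_id b A, Algebra.algebraMap_eq_smul_one]
  rw [← hcfc, hA.cfc_eq, IsHermitian.cfc]
  simp [-Unitary.conjStarAlgAut_apply]

lemma PosSemidef.one_le_det_one_add_smul {A : Matrix n n ℝ} (hA : A.PosSemidef) {c : ℝ}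
    (hc : 0 ≤ c) : 1 ≤ (1 + c • A).det := by
  rw [← one_smul ℝ (1 : Matrix n n ℝ), hA.1.det_smul_one_add_smul]
  exact Finset.one_le_prod fun i _ => by nlinarith [hA.eigenvalues_nonneg i]

lemma PosSemidef.one_lt_det_one_add_smul {A : Matrix n n ℝ} (hA : A.PosSemidef) (hA0 : A ≠ 0)
    {c : ℝ} (hc : 0 < c) : 1 < (1 + c • A).det := by
  obtain ⟨i, hi⟩ : ∃ i, hA.1.eigenvalues i ≠ 0 := by
    by_contra! h
    exact hA0 (hA.1.eigenvalues_eq_zero_iff.mp (funext h))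
  have hpos : 0 < hA.1.eigenvalues i := (hA.eigenvalues_nonneg i).lt_of_ne' hi
  rw [← one_smul ℝ (1 : Matrix n n ℝ), hA.1.det_smul_one_add_smul]
  simpa using Finset.prod_lt_prod (s := Finset.univ) (f := fun _ => (1 : ℝ)) (by simp)
    (fun j _ => by nlinarith [hA.eigenvalues_nonneg j]) ⟨i, Finset.mem_univ i, by nlinarith⟩

lemma posSemidef_self_mul_transpose {m ι : Type*} [Fintype m] [Fintype ι] (X : Matrix m ι ℝ) :
    (X * Xᵀ).PosSemidef := by
  simpa using posSemidef_self_mul_conjTranspose X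

omit [Fintype n] [DecidableEq n] in
lemma PosDef.smul_add_smul {M N : Matrix n n ℝ} (hM : M.PosDef) (hN : N.PosDef) {a b : ℝ}
    (ha : 0 ≤ a) (hb : 0 ≤ b) (hab : a + b = 1) : (a • M + b • N).PosDef := by
  rcases ha.eq_or_lt with rfl | ha'
  · simpa [show b = 1 by linarith] using hN
  · exact (hM.smul ha').add_posSemidef (hN.posSemidef.smul hb)

lemma PosDef.mul_log_det_le_log_det_smul_one_add_smul {C : Matrix n n ℝ} (hC : C.PosDef)
    {a b : ℝ} (ha : 0 ≤ a) (hb : 0 ≤ b) (hab : a + b = 1) :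
    b * Real.log C.det ≤ Real.log (a • 1 + b • C).det := by
  have hev := hC.eigenvalues_pos
  have hpos : ∀ i, 0 < a + b * hC.1.eigenvalues i := fun i => by
    nlinarith [hev i, mul_nonneg hb (sq_nonneg (hC.1.eigenvalues i)), mul_nonneg hb (hev i).le]
  have hdet : C.det = ∏ i, hC.1.eigenvalues i := by simpa using hC.1.det_eq_prod_eigenvalues
  rw [hC.1.det_smul_one_add_smul, hdet,
    Real.log_prod fun i _ => (hpos i).ne', Real.log_prod fun i _ => (hev i).ne', Finset.mul_sum]
  refine Finset.sum_le_sum fun i _ => ?_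
  simpa using strictConcaveOn_log_Ioi.concaveOn.2 (Set.mem_Ioi.2 one_pos) (Set.mem_Ioi.2 (hev i))
    ha hb hab

open scoped MatrixOrder in
lemma PosDef.mul_log_det_add_mul_log_det_le {M N : Matrix n n ℝ} (hM : M.PosDef) (hN : N.PosDef)
    {a b : ℝ} (ha : 0 ≤ a) (hb : 0 ≤ b) (hab : a + b = 1) :
    a * Real.log M.det + b * Real.log N.det ≤ Real.log (a • M + b • N).det := by
  -- Conjugating by `S = √M` reduces the claim to `M = 1`, i.e. to concavity of `log` on the
  -- eigenvalues of `C = S⁻¹ N S⁻¹`.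
  set S := CFC.sqrt M
  have hS : S.PosSemidef := (CFC.sqrt_nonneg M).posSemidef
  have hSS : S * S = M := CFC.sqrt_mul_sqrt_self M hM.posSemidef.nonneg
  have hdetS : S.det * S.det = M.det := by rw [← det_mul, hSS]
  have hSu : IsUnit S.det := isUnit_iff_ne_zero.2 (left_ne_zero_of_mul (hdetS ▸ hM.det_pos.ne'))
  have hSinv_star : star S⁻¹ = S⁻¹ := by
    rw [star_eq_conjTranspose, conjTranspose_nonsing_inv, hS.1.eq]
  set C := S⁻¹ * N * S⁻¹
  have hC : C.PosDef := by
    have := (Matrix.isUnit_nonsing_inv_iff.2 ((S.isUnit_iff_isUnit_det).2 hSu)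
      ).posDef_star_left_conjugate_iff.2 hN
    rwa [hSinv_star] at this
  have hSCS : S * C * S = N := by
    simp only [C, ← Matrix.mul_assoc, mul_nonsing_inv S hSu, Matrix.one_mul]
    rw [Matrix.mul_assoc, nonsing_inv_mul S hSu, Matrix.mul_one]
  have hconj : a • M + b • N = S * (a • 1 + b • C) * S := by
    rw [Matrix.mul_add, Matrix.add_mul, Matrix.mul_smul, Matrix.mul_one, Matrix.smul_mul, hSS,
      Matrix.mul_smul, Matrix.smul_mul, hSCS]
  have hdetN : N.det = M.det * C.det := by
    rw [← hSCS, det_mul, det_mul, ← hdetS]; ring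
  have hmid := hC.mul_log_det_le_log_det_smul_one_add_smul ha hb hab
  have hmid_pos : 0 < (a • 1 + b • C).det := (PosDef.one.smul_add_smul hC ha hb hab).det_pos
  rw [hconj, det_mul, det_mul, mul_right_comm, hdetS, Real.log_mul hM.det_pos.ne' hmid_pos.ne',
    hdetN, Real.log_mul hM.det_pos.ne' hC.det_pos.ne']
  have : a * Real.log M.det + b * Real.log M.det = Real.log M.det := by
    rw [← add_mul, hab, one_mul]
  linarith

lemma concaveOn_log_det : ConcaveOn ℝ {M : Matrix n n ℝ | M.PosDef} (fun M => Real.log M.det) :=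
  ⟨fun _ hM _ hN _ _ ha hb hab => hM.smul_add_smul hN ha hb hab,
    fun _ hM _ hN _ _ ha hb hab => hM.mul_log_det_add_mul_log_det_le hN ha hb hab⟩

end Matrix

section CodingRate

variable {d : ℕ} {ι : Type} [Fintype ι]

noncomputable def codingMatrix (X : Matrix (Fin d) ι ℝ) (ε : ℝ) : Matrix (Fin d) (Fin d) ℝ :=
  1 + ((d : ℝ) / (Fintype.card ι * ε ^ 2)) • (X * Xᵀ)

lemma codingRate_eq (X : Matrix (Fin d) ι ℝ) (ε : ℝ) :
    codingRate X ε = (Fintype.card ι / 2) * Real.log (codingMatrix X ε).det :=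
  rfl

lemma posDef_codingMatrix (X : Matrix (Fin d) ι ℝ) (ε : ℝ) : (codingMatrix X ε).PosDef :=
  PosDef.one.add_posSemidef ((posSemidef_self_mul_transpose X).smul (by positivity))

lemma codingRate_nonneg (X : Matrix (Fin d) ι ℝ) (ε : ℝ) : 0 ≤ codingRate X ε :=
  mul_nonneg (by positivity)
    (Real.log_nonneg ((posSemidef_self_mul_transpose X).one_le_det_one_add_smul (by positivity)))

lemma codingRate_pos {X : Matrix (Fin d) ι ℝ} (hX : X ≠ 0) {ε : ℝ} (hε : ε ≠ 0) :
    0 < codingRate X ε := by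
  obtain ⟨i, p, -⟩ : ∃ i p, X i p ≠ 0 := by
    contrapose! hX
    ext i p
    exact hX i p
  have hι : 0 < Fintype.card ι := Fintype.card_pos_iff.2 ⟨p⟩
  have hd : 0 < d := i.pos
  have hXX : X * Xᵀ ≠ 0 := by
    rwa [Ne, ← conjTranspose_eq_transpose_of_trivial, self_mul_conjTranspose_eq_zero]
  exact mul_pos (by positivity)
    (Real.log_pos ((posSemidef_self_mul_transpose X).one_lt_det_one_add_smul hXX (by positivity)))

end CodingRate

section Concatenation

variable {d k : ℕ} {m : Fin k → ℕ}

lemma hconcat_ne_zero {Xc : (j : Fin k) → Matrix (Fin d) (Fin (m j)) ℝ} {j : Fin k}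
    (hj : Xc j ≠ 0) : hconcat Xc ≠ 0 := by
  contrapose! hj
  ext i p
  simpa [hconcat] using congrFun (congrFun hj i) ⟨j, p⟩

lemma hconcat_mul_transpose (Xc : (j : Fin k) → Matrix (Fin d) (Fin (m j)) ℝ) :
    hconcat Xc * (hconcat Xc)ᵀ = ∑ j, Xc j * (Xc j)ᵀ := by
  ext i l
  simp only [mul_apply, transpose_apply, Matrix.sum_apply, hconcat, of_apply]
  rw [← Finset.univ_sigma_univ, Finset.sum_sigma]

lemma sum_smul_codingMatrix (Xc : (j : Fin k) → Matrix (Fin d) (Fin (m j)) ℝ) (ε : ℝ)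
    (hm : ∑ j, (m j : ℝ) ≠ 0) :
    ∑ j, ((m j : ℝ) / ∑ j, (m j : ℝ)) • codingMatrix (Xc j) ε = codingMatrix (hconcat Xc) ε := by
  set N := ∑ j, (m j : ℝ)
  have hterm : ∀ j, ((m j : ℝ) / N) • codingMatrix (Xc j) ε
      = ((m j : ℝ) / N) • 1 + ((d : ℝ) / (N * ε ^ 2)) • (Xc j * (Xc j)ᵀ) := by
    intro j
    rw [codingMatrix, smul_add, smul_smul, Fintype.card_fin]
    -- The junk coefficient `d / 0 = 0` of a class without columns is harmless: its `X^j` is `0`.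
    by_cases hmj : m j = 0
    · have : IsEmpty (Fin (m j)) := by rw [hmj]; infer_instance
      simp [Subsingleton.elim (Xc j) 0]
    · congr 2
      field_simp
  rw [Finset.sum_congr rfl fun j _ => hterm j, Finset.sum_add_distrib, ← Finset.sum_smul,
    ← Finset.sum_div, div_self hm, one_smul, ← Finset.smul_sum, ← hconcat_mul_transpose,
    codingMatrix, Fintype.card_sigma]
  simp [N]

lemma sum_codingRate_le_codingRate_hconcat (Xc : (j : Fin k) → Matrix (Fin d) (Fin (m j)) ℝ)
    (ε : ℝ) : ∑ j, codingRate (Xc j) ε ≤ codingRate (hconcat Xc) ε := by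
  rcases Nat.eq_zero_or_pos (∑ j, m j) with hm | hm
  · simp [codingRate, Finset.sum_eq_zero_iff.1 hm]
  set N := ∑ j, (m j : ℝ)
  have hN : 0 < N := by simp only [N, ← Nat.cast_sum]; exact_mod_cast hm
  have hjensen := concaveOn_log_det.le_map_sum (t := Finset.univ) (w := fun j => (m j : ℝ) / N)
    (p := fun j => codingMatrix (Xc j) ε) (fun j _ => by positivity)
    (by rw [← Finset.sum_div, div_self hN.ne']) (fun j _ => posDef_codingMatrix (Xc j) ε)
  rw [sum_smul_codingMatrix Xc ε hN.ne'] at hjensen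
  calc ∑ j, codingRate (Xc j) ε
      = (N / 2) * ∑ j, ((m j : ℝ) / N) • Real.log (codingMatrix (Xc j) ε).det := by
        rw [Finset.mul_sum]
        refine Finset.sum_congr rfl fun j _ => ?_
        rw [codingRate_eq, Fintype.card_fin, smul_eq_mul]
        field_simp
    _ ≤ (N / 2) * Real.log (codingMatrix (hconcat Xc) ε).det := by gcongr
    _ = codingRate (hconcat Xc) ε := by simp [codingRate_eq, N]

end Concatenation

theorem stmt14_general (ε : ℝ) (hε : 0 < ε) (d k : ℕ)
    (m : Fin k → ℕ)
    (Xc : (j : Fin k) → Matrix (Fin d) (Fin (m j)) ℝ)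
    (hX : ∃ j, Xc j ≠ 0) :
    0 < (∑ j, codingRate (Xc j) ε) / codingRate (hconcat Xc) ε ∧
      (∑ j, codingRate (Xc j) ε) / codingRate (hconcat Xc) ε ≤ 1 := by
  obtain ⟨j, hj⟩ := hX
  have hR : 0 < codingRate (hconcat Xc) ε := codingRate_pos (hconcat_ne_zero hj) hε.ne'
  have hRC : 0 < ∑ j, codingRate (Xc j) ε :=
    (codingRate_pos hj hε.ne').trans_le
      (Finset.single_le_sum (fun j _ => codingRate_nonneg (Xc j) ε) (Finset.mem_univ j))
  exact ⟨div_pos hRC hR, (div_le_one hR).2 (sum_codingRate_le_codingRate_hconcat Xc ε)⟩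

theorem stmt14 (ε : ℝ) (hε : 0 < ε) (d k : ℕ) (hd : 1 ≤ d) (hk : 1 ≤ k)
    (m : Fin k → ℕ) (hm : ∀ j, 1 ≤ m j)
    (Xc : (j : Fin k) → Matrix (Fin d) (Fin (m j)) ℝ)
    (hX : ∃ j, Xc j ≠ 0) :
    0 < (∑ j, codingRate (Xc j) ε) / codingRate (hconcat Xc) ε ∧
      (∑ j, codingRate (Xc j) ε) / codingRate (hconcat Xc) ε ≤ 1 :=
  stmt14_general ε hε d k m Xc hX
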